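/- Suppose the norm ‖·‖ on ℝ^k satisfies Assumption 1, 0 < γ₂ ≤ γ₁ ≤ 1, and C₁, C₂ > 0; set k₊ := |V|. Let X be an ℝ^k-valued random vector whose law has a Lebesgue density p_X continuous at 0 with p_X(0) > 0, and with 0 an interior point of its support. Then there exists a constant c ∈ (0,∞), not depending on p_X, such that lim_{b→0⁺} b^{−(k₊/γ₁ + (k−k₊)/γ₂)} · P( C₁‖(X)_{V+}‖^{γ₁} + C₂‖(X)_{V−}‖^{γ₂} < b ) = c · p_X(0). -/

import Mathlib

open MeasureTheory Filter Finset

/-- Positive part of a vector relative to coordinate set `V`. -/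
def vplus {k : ℕ} (V : Finset (Fin k)) (z : Fin k → ℝ) : Fin k → ℝ :=
  fun j => if j ∈ V then max (z j) 0 else z j

/-- Negative part of a vector relative to coordinate set `V`. -/
def vminus {k : ℕ} (V : Finset (Fin k)) (z : Fin k → ℝ) : Fin k → ℝ :=
  vplus V (-z)

/-- A norm on `ℝ^k` satisfying Assumption 1 (monotone in the magnitude of each coordinate). -/
structure MonNorm (k : ℕ) where
  N : (Fin k → ℝ) → ℝ
  add_le : ∀ x y, N (x + y) ≤ N x + N y
  smul_eq : ∀ (a : ℝ) (x), N (a • x) = |a| * N x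
  eq_zero_iff : ∀ x, N x = 0 ↔ x = 0
  mono : ∀ z w : Fin k → ℝ, (∀ j, |z j| ≤ |w j|) → N z ≤ N w

/-- Hölder continuity with exponent `γ` and constant `C` w.r.t. the norm `N`. -/
def HolderW {k : ℕ} (N : (Fin k → ℝ) → ℝ) (γ C : ℝ) (f : (Fin k → ℝ) → ℝ) : Prop :=
  ∀ x z : Fin k → ℝ, |f x - f z| ≤ C * N (x - z) ^ γ

/-- Coordinatewise monotonicity w.r.t. the coordinates in `V`. -/
def MonoV {k : ℕ} (V : Finset (Fin k)) (f : (Fin k → ℝ) → ℝ) : Prop :=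
  ∀ x z : Fin k → ℝ, (∀ j ∈ V, z j ≤ x j) → (∀ j ∉ V, x j = z j) → f z ≤ f x

/-- The monotone Hölder class `Λ₊,V(γ,C)`. -/
def Lam {k : ℕ} (V : Finset (Fin k)) (N : (Fin k → ℝ) → ℝ) (γ C : ℝ) :
    Set ((Fin k → ℝ) → ℝ) :=
  {f | HolderW N γ C f ∧ MonoV V f}

/-!
Write `G_r(y) = C₁ N(y_{V+,r}) ^ γ₁ + C₂ N(y_{V-}) ^ γ₂`, where `y_{V+,r}` is `(y)_{V+}` with the
coordinates outside `V` multiplied by `r`, so that the event is `G_1(X) < b`. On the orthant where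
exactly the coordinates in `S` are nonnegative, the diagonal substitution `x_j = b^{1/γ₁} y_j` for
`j ∈ V ∩ S` and `x_j = b^{1/γ₂} y_j` otherwise maps `{G_{b^θ} < 1}` onto `{G_1 < b}`, with
`θ = 1/γ₂ - 1/γ₁ ≥ 0`. Summing over orthants,
`b^{-α} vol {G_1 < b} = ∑_S b^{|V \ S| θ} vol ({G_{b^θ} < 1} ∩ orthant S)`,
and each volume converges by dominated convergence because `G_r` is continuous and monotone in
`r ≥ 0` with bounded sublevel sets. Finally `{G_1 < b}` shrinks to `0`, where `p` is continuous, so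
`P(G_1(X) < b) = (p(0) + o(1)) vol {G_1 < b}`.
-/

open Topology

namespace MonNorm

variable {k : ℕ} (N : MonNorm k)

protected lemma map_zero : N.N 0 = 0 := (N.eq_zero_iff 0).2 rfl

protected lemma map_neg (x : Fin k → ℝ) : N.N (-x) = N.N x := by
  simpa using N.smul_eq (-1) x

lemma nonneg (x : Fin k → ℝ) : 0 ≤ N.N x := by
  have h := N.add_le x (-x)
  rw [add_neg_cancel, N.map_zero, N.map_neg] at h
  linarith

lemma convexOn : ConvexOn ℝ Set.univ N.N := by
  refine ⟨convex_univ, fun x _ y _ a b ha hb _ => ?_⟩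
  calc N.N (a • x + b • y) ≤ N.N (a • x) + N.N (b • y) := N.add_le _ _
    _ = a • N.N x + b • N.N y := by
      rw [N.smul_eq, N.smul_eq, abs_of_nonneg ha, abs_of_nonneg hb, smul_eq_mul, smul_eq_mul]

protected lemma continuous : Continuous N.N :=
  continuousOn_univ.1 (N.convexOn.continuousOn isOpen_univ)

protected lemma map_abs (x : Fin k → ℝ) : N.N (fun j => |x j|) = N.N x :=
  le_antisymm (N.mono _ _ fun j => by simp) (N.mono _ _ fun j => by simp)

lemma le_add_of_abs_le_add {x y z : Fin k → ℝ} (h : ∀ j, |x j| ≤ |y j| + |z j|) :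
    N.N x ≤ N.N y + N.N z :=
  calc N.N x ≤ N.N ((fun j => |y j|) + fun j => |z j|) :=
        N.mono _ _ fun j => (h j).trans (le_abs_self _)
    _ ≤ N.N y + N.N z := (N.add_le _ _).trans_eq (by rw [N.map_abs, N.map_abs])

lemma mul_abs_apply_le (x : Fin k → ℝ) (j : Fin k) :
    N.N (Pi.single j 1) * |x j| ≤ N.N x := by
  calc N.N (Pi.single j 1) * |x j| = N.N (x j • Pi.single j 1) := by
        rw [N.smul_eq, mul_comm]
    _ ≤ N.N x := N.mono _ _ fun i => by
        by_cases h : i = j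
        · subst h; simp
        · simp [h]

lemma single_pos (j : Fin k) : 0 < N.N (Pi.single j 1) :=
  (N.nonneg _).lt_of_ne' fun h => by simpa using congrFun ((N.eq_zero_iff _).1 h) j

lemma exists_norm_le : ∃ M, 0 ≤ M ∧ ∀ x, ‖x‖ ≤ M * N.N x := by
  have hinv : ∀ j, 0 ≤ (N.N (Pi.single j 1))⁻¹ := fun j => (inv_pos.2 (N.single_pos j)).le
  refine ⟨∑ j, (N.N (Pi.single j 1))⁻¹, Finset.sum_nonneg fun j _ => hinv j, fun x => ?_⟩
  refine (pi_norm_le_iff_of_nonneg (mul_nonneg (Finset.sum_nonneg fun j _ => hinv j)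
    (N.nonneg x))).2 fun j => ?_
  calc ‖x j‖ ≤ (N.N (Pi.single j 1))⁻¹ * N.N x := by
        rw [Real.norm_eq_abs, inv_mul_eq_div, le_div_iff₀ (N.single_pos j), mul_comm]
        exact N.mul_abs_apply_le x j
    _ ≤ _ := mul_le_mul_of_nonneg_right
        (Finset.single_le_sum (fun i _ => hinv i) (Finset.mem_univ j)) (N.nonneg x)

end MonNorm

section PositivePart

variable {k : ℕ} (V : Finset (Fin k))

def vplusScaled (r : ℝ) (z : Fin k → ℝ) : Fin k → ℝ :=
  fun j => if j ∈ V then max (z j) 0 else r * z j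

lemma vplusScaled_one : vplusScaled V 1 = vplus V := by
  funext z j
  simp [vplusScaled, vplus]

lemma continuous_vplusScaled : Continuous fun q : ℝ × (Fin k → ℝ) => vplusScaled V q.1 q.2 :=
  continuous_pi fun j => by unfold vplusScaled; split_ifs <;> fun_prop

lemma continuous_vminus : Continuous (vminus V) :=
  continuous_pi fun j => by unfold vminus vplus; split_ifs <;> fun_prop

lemma abs_le_vplusScaled_add_vminus (r : ℝ) (z : Fin k → ℝ) (j : Fin k) :
    |z j| ≤ |vplusScaled V r z j| + |vminus V z j| := by
  by_cases hj : j ∈ V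
  · simp only [vplusScaled, vminus, vplus, hj, if_true, Pi.neg_apply]
    rcases le_total 0 (z j) with h | h
    · simp [h, abs_of_nonneg h]
    · simp [h, abs_of_nonpos h]
  · simp only [vplusScaled, vminus, vplus, hj, if_false, Pi.neg_apply, abs_neg, abs_mul]
    exact le_add_of_nonneg_left (by positivity)

lemma abs_vplusScaled_le_of_le {r r' : ℝ} (hr : 0 ≤ r) (hrr' : r ≤ r') (z : Fin k → ℝ) (j : Fin k) :
    |vplusScaled V r z j| ≤ |vplusScaled V r' z j| := by
  by_cases hj : j ∈ V
  · simp [vplusScaled, hj]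
  · simp only [vplusScaled, hj, if_false, abs_mul, abs_of_nonneg hr, abs_of_nonneg (hr.trans hrr')]
    exact mul_le_mul_of_nonneg_right hrr' (abs_nonneg _)

end PositivePart

section Gauge

variable {k : ℕ} (V : Finset (Fin k)) (N : MonNorm k) (γ₁ γ₂ C₁ C₂ : ℝ)

noncomputable def posNegGauge (r : ℝ) (y : Fin k → ℝ) : ℝ :=
  C₁ * N.N (vplusScaled V r y) ^ γ₁ + C₂ * N.N (vminus V y) ^ γ₂

variable {V N γ₁ γ₂ C₁ C₂}

lemma posNegGauge_one (x : Fin k → ℝ) :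
    posNegGauge V N γ₁ γ₂ C₁ C₂ 1 x =
      C₁ * N.N (vplus V x) ^ γ₁ + C₂ * N.N (vminus V x) ^ γ₂ := by
  rw [posNegGauge, vplusScaled_one]

lemma posNegGauge_zero (hγ₁ : 0 < γ₁) (hγ₂ : 0 < γ₂) (r : ℝ) :
    posNegGauge V N γ₁ γ₂ C₁ C₂ r 0 = 0 := by
  have h1 : vplusScaled V r 0 = 0 := by funext j; simp [vplusScaled]
  have h2 : vminus V 0 = 0 := by funext j; simp [vminus, vplus]
  simp [posNegGauge, h1, h2, N.map_zero, Real.zero_rpow hγ₁.ne', Real.zero_rpow hγ₂.ne']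

lemma continuous_posNegGauge (hγ₁ : 0 ≤ γ₁) (hγ₂ : 0 ≤ γ₂) :
    Continuous fun q : ℝ × (Fin k → ℝ) => posNegGauge V N γ₁ γ₂ C₁ C₂ q.1 q.2 := by
  unfold posNegGauge
  have h1 := N.continuous.comp (continuous_vplusScaled V)
  have h2 := N.continuous.comp ((continuous_vminus V).comp (continuous_snd (X := ℝ)))
  exact (continuous_const.mul (h1.rpow_const fun _ => Or.inr hγ₁)).add
    (continuous_const.mul (h2.rpow_const fun _ => Or.inr hγ₂))

lemma posNegGauge_mono (hC₁ : 0 ≤ C₁) (hγ₁ : 0 ≤ γ₁) {r r' : ℝ} (hr : 0 ≤ r) (hrr' : r ≤ r')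
    (y : Fin k → ℝ) : posNegGauge V N γ₁ γ₂ C₁ C₂ r y ≤ posNegGauge V N γ₁ γ₂ C₁ C₂ r' y := by
  have hN := N.mono _ _ (abs_vplusScaled_le_of_le V hr hrr' y)
  unfold posNegGauge
  gcongr
  exact N.nonneg _

lemma isOpen_setOf_posNegGauge_lt (hγ₁ : 0 ≤ γ₁) (hγ₂ : 0 ≤ γ₂) (r t : ℝ) :
    IsOpen {y | posNegGauge V N γ₁ γ₂ C₁ C₂ r y < t} :=
  isOpen_lt ((continuous_posNegGauge hγ₁ hγ₂).comp (continuous_const.prodMk continuous_id))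
    continuous_const

lemma exists_norm_le_of_posNegGauge_lt (hγ₁ : 0 < γ₁) (hγ₂ : 0 < γ₂) (hC₁ : 0 < C₁)
    (hC₂ : 0 < C₂) : ∃ M, 0 ≤ M ∧ ∀ r t y, posNegGauge V N γ₁ γ₂ C₁ C₂ r y < t →
      ‖y‖ ≤ M * ((t / C₁) ^ γ₁⁻¹ + (t / C₂) ^ γ₂⁻¹) := by
  obtain ⟨M, hM, hnorm⟩ := N.exists_norm_le
  refine ⟨M, hM, fun r t y hy => (hnorm y).trans (mul_le_mul_of_nonneg_left ?_ hM)⟩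
  have h₁ : 0 ≤ C₁ * N.N (vplusScaled V r y) ^ γ₁ := by
    have := N.nonneg (vplusScaled V r y); positivity
  have h₂ : 0 ≤ C₂ * N.N (vminus V y) ^ γ₂ := by
    have := N.nonneg (vminus V y); positivity
  unfold posNegGauge at hy
  have ht : 0 ≤ t := by linarith
  have b₁ : N.N (vplusScaled V r y) < (t / C₁) ^ γ₁⁻¹ := by
    rw [Real.lt_rpow_inv_iff_of_pos (N.nonneg _) (by positivity) hγ₁, lt_div_iff₀ hC₁]
    linarith
  have b₂ : N.N (vminus V y) < (t / C₂) ^ γ₂⁻¹ := by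
    rw [Real.lt_rpow_inv_iff_of_pos (N.nonneg _) (by positivity) hγ₂, lt_div_iff₀ hC₂]
    linarith
  exact (N.le_add_of_abs_le_add (abs_le_vplusScaled_add_vminus V r y)).trans (by linarith)

lemma volume_setOf_posNegGauge_lt_ne_top (hγ₁ : 0 < γ₁) (hγ₂ : 0 < γ₂) (hC₁ : 0 < C₁)
    (hC₂ : 0 < C₂) (r t : ℝ) : volume {y | posNegGauge V N γ₁ γ₂ C₁ C₂ r y < t} ≠ ⊤ := by
  obtain ⟨M, -, hM⟩ := exists_norm_le_of_posNegGauge_lt (V := V) (N := N) hγ₁ hγ₂ hC₁ hC₂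
  refine (Bornology.IsBounded.measure_lt_top ?_).ne
  exact (Metric.isBounded_closedBall (x := 0)).subset fun y hy => by
    simpa using hM r t y hy

lemma tendsto_setOf_posNegGauge_lt_smallSets (hγ₁ : 0 < γ₁) (hγ₂ : 0 < γ₂) (hC₁ : 0 < C₁)
    (hC₂ : 0 < C₂) :
    Tendsto (fun b => {x | posNegGauge V N γ₁ γ₂ C₁ C₂ 1 x < b}) (𝓝[>] 0) (𝓝 0).smallSets := by
  obtain ⟨M, -, hM⟩ := exists_norm_le_of_posNegGauge_lt (V := V) (N := N) hγ₁ hγ₂ hC₁ hC₂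
  have hρ : Tendsto (fun t : ℝ => M * ((t / C₁) ^ γ₁⁻¹ + (t / C₂) ^ γ₂⁻¹)) (𝓝 0) (𝓝 0) := by
    have hc : Continuous fun t : ℝ => M * ((t / C₁) ^ γ₁⁻¹ + (t / C₂) ^ γ₂⁻¹) := by
      refine continuous_const.mul (Continuous.add ?_ ?_) <;>
        exact (continuous_id.div_const _).rpow_const fun _ => Or.inr (by positivity)
    simpa [Real.zero_rpow (inv_pos.2 hγ₁).ne', Real.zero_rpow (inv_pos.2 hγ₂).ne'] using
      hc.tendsto 0
  refine (Metric.nhds_basis_closedBall.smallSets.tendsto_right_iff).2 fun δ hδ => ?_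
  filter_upwards [(hρ.mono_left nhdsWithin_le_nhds).eventually (Iic_mem_nhds hδ)] with t ht y hy
  simpa using (hM 1 t y hy).trans ht

end Gauge

section Orthant

variable {k : ℕ}

def orthant (S : Finset (Fin k)) : Set (Fin k → ℝ) := {x | ∀ j, 0 ≤ x j ↔ j ∈ S}

lemma orthant_eq_preimage (S : Finset (Fin k)) :
    orthant S = (fun x : Fin k → ℝ => Finset.univ.filter (0 ≤ x ·)) ⁻¹' {S} := by
  ext x
  simp [orthant, Finset.ext_iff]

lemma measurableSet_orthant (S : Finset (Fin k)) : MeasurableSet (orthant S) := by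
  have h : orthant S = ⋂ j, {x : Fin k → ℝ | 0 ≤ x j ↔ j ∈ S} := by ext; simp [orthant]
  rw [h]
  refine MeasurableSet.iInter fun j => ?_
  by_cases hj : j ∈ S
  · simpa [hj] using measurableSet_le measurable_const (measurable_pi_apply j)
  · simpa [hj] using measurableSet_lt (measurable_pi_apply j) measurable_const

lemma sum_measure_inter_orthant (μ : Measure (Fin k → ℝ)) (A : Set (Fin k → ℝ)) :
    ∑ S, μ (A ∩ orthant S) = μ A := by
  have h := sum_measure_preimage_singleton (μ := μ.restrict A) Finset.univ
    (f := fun x : Fin k → ℝ => Finset.univ.filter (0 ≤ x ·))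
    fun S _ => orthant_eq_preimage S ▸ measurableSet_orthant S
  simp only [← orthant_eq_preimage, Finset.coe_univ, Set.preimage_univ,
    Measure.restrict_apply_univ] at h
  rw [← h]
  exact Finset.sum_congr rfl fun S _ => by
    rw [Measure.restrict_apply (measurableSet_orthant S), Set.inter_comm]

lemma mul_mem_orthant_iff {d y : Fin k → ℝ} (hd : ∀ j, 0 < d j) (S : Finset (Fin k)) :
    d * y ∈ orthant S ↔ y ∈ orthant S := by
  simp only [orthant, Set.mem_ofPred_eq, Pi.mul_apply, mul_nonneg_iff_of_pos_left (hd _)]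

lemma volume_preimage_mul {d : Fin k → ℝ} (hd : ∏ j, d j ≠ 0) (X : Set (Fin k → ℝ)) :
    volume ((d * ·) ⁻¹' X) = ENNReal.ofReal |(∏ j, d j)⁻¹| * volume X := by
  have h : (d * ·) = Matrix.toLin' (Matrix.diagonal d) := by
    ext y j
    simp [Matrix.mulVec_diagonal]
  rw [h, Measure.addHaar_preimage_linearMap, LinearMap.det_toLin', Matrix.det_diagonal]
  rwa [LinearMap.det_toLin', Matrix.det_diagonal]

variable (V : Finset (Fin k))

def orthantScale (S : Finset (Fin k)) (a c : ℝ) : Fin k → ℝ :=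
  fun j => if j ∈ V ∩ S then a else c

lemma vplus_orthantScale_mul {S : Finset (Fin k)} {a c : ℝ} (ha : 0 < a) (hc : 0 ≤ c)
    {y : Fin k → ℝ} (hy : y ∈ orthant S) :
    vplus V (orthantScale V S a c * y) = a • vplusScaled V (c / a) y := by
  funext j
  simp only [vplus, vplusScaled, orthantScale, Pi.mul_apply, Pi.smul_apply, smul_eq_mul,
    Finset.mem_inter]
  by_cases hjV : j ∈ V
  · by_cases hjS : j ∈ S
    · have hy0 : 0 ≤ y j := (hy j).2 hjS
      simp [hjV, hjS, hy0, mul_nonneg ha.le hy0]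
    · have hy0 : y j < 0 := not_le.1 fun h => hjS ((hy j).1 h)
      simp [hjV, hjS, hy0.le, mul_nonpos_of_nonneg_of_nonpos hc hy0.le]
  · simp only [hjV, false_and, if_false]
    field_simp

lemma vminus_orthantScale_mul {S : Finset (Fin k)} {a c : ℝ} (ha : 0 ≤ a) (hc : 0 ≤ c)
    {y : Fin k → ℝ} (hy : y ∈ orthant S) :
    vminus V (orthantScale V S a c * y) = c • vminus V y := by
  funext j
  simp only [vminus, vplus, orthantScale, Pi.neg_apply, Pi.mul_apply, Pi.smul_apply,
    smul_eq_mul, Finset.mem_inter]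
  by_cases hjV : j ∈ V
  · by_cases hjS : j ∈ S
    · have hy0 : 0 ≤ y j := (hy j).2 hjS
      simp [hjV, hjS, hy0, mul_nonneg ha hy0]
    · have hy0 : y j < 0 := not_le.1 fun h => hjS ((hy j).1 h)
      simp [hjV, hjS, hy0.le, mul_nonpos_of_nonneg_of_nonpos hc hy0.le]
  · simp only [hjV, false_and, if_false]
    ring

lemma prod_orthantScale {b : ℝ} (hb : 0 < b) (S : Finset (Fin k)) (γ₁ γ₂ : ℝ) :
    ∏ j, orthantScale V S (b ^ γ₁⁻¹) (b ^ γ₂⁻¹) j =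
      b ^ ((V.card : ℝ) / γ₁ + ((k : ℝ) - V.card) / γ₂ + (V \ S).card * (γ₂⁻¹ - γ₁⁻¹)) := by
  have h : ∀ j, orthantScale V S (b ^ γ₁⁻¹) (b ^ γ₂⁻¹) j =
      b ^ (γ₂⁻¹ + if j ∈ V ∩ S then γ₁⁻¹ - γ₂⁻¹ else 0) := fun j => by
    unfold orthantScale; split_ifs <;> ring_nf
  simp_rw [h, ← Real.rpow_sum_of_pos hb, Finset.sum_add_distrib, Finset.sum_ite_mem]
  have hcard := Finset.card_sdiff_add_card_inter V S
  congr 1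
  simp only [Finset.sum_const, Finset.card_univ, Fintype.card_fin, nsmul_eq_mul,
    Finset.univ_inter]
  rw [show ((V ∩ S).card : ℝ) = V.card - (V \ S).card by rw [← hcard]; push_cast; ring]
  ring

end Orthant

section Asymptotics

variable {k : ℕ} {V : Finset (Fin k)} {N : MonNorm k} {γ₁ γ₂ C₁ C₂ : ℝ}

lemma posNegGauge_orthantScale_mul (hγ₁ : 0 < γ₁) (hγ₂ : 0 < γ₂) {b : ℝ} (hb : 0 < b)
    {S : Finset (Fin k)} {y : Fin k → ℝ} (hy : y ∈ orthant S) :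
    posNegGauge V N γ₁ γ₂ C₁ C₂ 1 (orthantScale V S (b ^ γ₁⁻¹) (b ^ γ₂⁻¹) * y) =
      b * posNegGauge V N γ₁ γ₂ C₁ C₂ (b ^ (γ₂⁻¹ - γ₁⁻¹)) y := by
  have h₁ : 0 < b ^ γ₁⁻¹ := Real.rpow_pos_of_pos hb _
  have h₂ : 0 < b ^ γ₂⁻¹ := Real.rpow_pos_of_pos hb _
  rw [posNegGauge_one, vplus_orthantScale_mul V h₁ h₂.le hy,
    vminus_orthantScale_mul V h₁.le h₂.le hy, N.smul_eq, N.smul_eq, abs_of_pos h₁,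
    abs_of_pos h₂, Real.mul_rpow h₁.le (N.nonneg _), Real.mul_rpow h₂.le (N.nonneg _),
    ← Real.rpow_mul hb.le, ← Real.rpow_mul hb.le, inv_mul_cancel₀ hγ₁.ne',
    inv_mul_cancel₀ hγ₂.ne', Real.rpow_one, ← Real.rpow_sub hb]
  unfold posNegGauge
  ring

lemma preimage_orthantScale_mul (hγ₁ : 0 < γ₁) (hγ₂ : 0 < γ₂) {b : ℝ} (hb : 0 < b)
    (S : Finset (Fin k)) :
    (orthantScale V S (b ^ γ₁⁻¹) (b ^ γ₂⁻¹) * ·) ⁻¹'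
        ({x | posNegGauge V N γ₁ γ₂ C₁ C₂ 1 x < b} ∩ orthant S) =
      {y | posNegGauge V N γ₁ γ₂ C₁ C₂ (b ^ (γ₂⁻¹ - γ₁⁻¹)) y < 1} ∩ orthant S := by
  have hd : ∀ j, 0 < orthantScale V S (b ^ γ₁⁻¹) (b ^ γ₂⁻¹) j := fun j => by
    unfold orthantScale; split_ifs <;> exact Real.rpow_pos_of_pos hb _
  ext y
  simp only [Set.mem_preimage, Set.mem_inter_iff, Set.mem_ofPred_eq, mul_mem_orthant_iff hd]
  refine and_congr_left fun hy => ?_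
  rw [posNegGauge_orthantScale_mul hγ₁ hγ₂ hb hy, mul_lt_iff_lt_one_right hb]

lemma rpow_mul_volume_setOf_posNegGauge_lt (hγ₁ : 0 < γ₁) (hγ₂ : 0 < γ₂) (hC₁ : 0 < C₁)
    (hC₂ : 0 < C₂) {b : ℝ} (hb : 0 < b) :
    b ^ (-((V.card : ℝ) / γ₁ + ((k : ℝ) - V.card) / γ₂)) *
        (volume {x | posNegGauge V N γ₁ γ₂ C₁ C₂ 1 x < b}).toReal =
      ∑ S, b ^ ((V \ S).card * (γ₂⁻¹ - γ₁⁻¹)) *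
        (volume ({y | posNegGauge V N γ₁ γ₂ C₁ C₂ (b ^ (γ₂⁻¹ - γ₁⁻¹)) y < 1} ∩
          orthant S)).toReal := by
  have hfin : ∀ S, volume ({x | posNegGauge V N γ₁ γ₂ C₁ C₂ 1 x < b} ∩ orthant S) ≠ ⊤ :=
    fun S => ne_top_of_le_ne_top (volume_setOf_posNegGauge_lt_ne_top hγ₁ hγ₂ hC₁ hC₂ 1 b)
      (measure_mono Set.inter_subset_left)
  rw [← sum_measure_inter_orthant volume, ENNReal.toReal_sum fun S _ => hfin S, Finset.mul_sum]
  refine Finset.sum_congr rfl fun S _ => ?_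
  have hprod := prod_orthantScale V hb S γ₁ γ₂
  rw [← preimage_orthantScale_mul hγ₁ hγ₂ hb S,
    volume_preimage_mul (hprod ▸ (Real.rpow_pos_of_pos hb _).ne'), hprod, ENNReal.toReal_mul,
    ENNReal.toReal_ofReal (abs_nonneg _), abs_inv, abs_of_pos (Real.rpow_pos_of_pos hb _),
    ← mul_assoc, ← Real.rpow_neg hb.le, ← Real.rpow_add hb]
  ring_nf

lemma tendsto_volume_setOf_posNegGauge_lt_inter_orthant (hγ₂ : 0 < γ₂) (hγ : γ₂ ≤ γ₁)
    (hC₁ : 0 < C₁) (hC₂ : 0 < C₂) (S : Finset (Fin k)) :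
    Tendsto (fun b : ℝ =>
        volume ({y | posNegGauge V N γ₁ γ₂ C₁ C₂ (b ^ (γ₂⁻¹ - γ₁⁻¹)) y < 1} ∩ orthant S))
      (𝓝[>] 0)
      (𝓝 (volume ({y | posNegGauge V N γ₁ γ₂ C₁ C₂ (0 ^ (γ₂⁻¹ - γ₁⁻¹)) y < 1} ∩
        orthant S))) := by
  have hγ₁ : 0 < γ₁ := hγ₂.trans_le hγ
  set θ := γ₂⁻¹ - γ₁⁻¹
  have hθ : 0 ≤ θ := sub_nonneg.2 (inv_anti₀ hγ₂ hγ)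
  have hmeas : ∀ r, MeasurableSet ({y | posNegGauge V N γ₁ γ₂ C₁ C₂ r y < 1} ∩ orthant S) :=
    fun r => (isOpen_setOf_posNegGauge_lt hγ₁.le hγ₂.le r 1).measurableSet.inter
      (measurableSet_orthant S)
  have hmono : ∀ b : ℝ, 0 < b → ∀ y,
      posNegGauge V N γ₁ γ₂ C₁ C₂ (0 ^ θ) y ≤ posNegGauge V N γ₁ γ₂ C₁ C₂ (b ^ θ) y :=
    fun b hb => posNegGauge_mono hC₁.le hγ₁.le (Real.rpow_nonneg le_rfl θ)
      (Real.rpow_le_rpow le_rfl hb.le hθ)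
  refine tendsto_measure_of_tendsto_indicator _ (fun b => hmeas _) (hmeas (0 ^ θ))
    (ne_top_of_le_ne_top (volume_setOf_posNegGauge_lt_ne_top hγ₁ hγ₂ hC₁ hC₂ (0 ^ θ) 1)
      (measure_mono Set.inter_subset_left)) ?_ fun y => ?_
  · filter_upwards [self_mem_nhdsWithin] with b hb
    exact Set.inter_subset_inter_left _ fun y hy => (hmono b hb y).trans_lt hy
  · by_cases hy : posNegGauge V N γ₁ γ₂ C₁ C₂ (0 ^ θ) y < 1
    · have hpath : ContinuousAt (fun b : ℝ => (b ^ θ, y)) 0 :=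
        (Real.continuousAt_rpow_const 0 θ (Or.inr hθ)).prodMk continuousAt_const
      have hcont := ContinuousAt.comp (x := (0 : ℝ))
        (continuous_posNegGauge (V := V) (N := N) (C₁ := C₁) (C₂ := C₂) hγ₁.le
          hγ₂.le).continuousAt hpath
      filter_upwards [(hcont.eventually_lt_const hy).filter_mono nhdsWithin_le_nhds] with b hb
      simp only [Function.comp_apply] at hb
      simp [hb, hy]
    · filter_upwards [self_mem_nhdsWithin] with b hb
      have hby : ¬ posNegGauge V N γ₁ γ₂ C₁ C₂ (b ^ θ) y < 1 :=
        fun h => hy ((hmono b hb y).trans_lt h)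
      simp [hby, hy]

/- With `0 ^ 0 = 1`, every orthant contributes when `γ₁ = γ₂`; otherwise only those with
`V ⊆ S` do. -/
variable (V N γ₁ γ₂ C₁ C₂) in
noncomputable def smallBallConst : ℝ :=
  ∑ S, (0 : ℝ) ^ ((V \ S).card * (γ₂⁻¹ - γ₁⁻¹)) *
    (volume ({y | posNegGauge V N γ₁ γ₂ C₁ C₂ (0 ^ (γ₂⁻¹ - γ₁⁻¹)) y < 1} ∩ orthant S)).toReal

lemma tendsto_rpow_mul_volume_setOf_posNegGauge_lt (hγ₂ : 0 < γ₂) (hγ : γ₂ ≤ γ₁)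
    (hC₁ : 0 < C₁) (hC₂ : 0 < C₂) :
    Tendsto (fun b : ℝ => b ^ (-((V.card : ℝ) / γ₁ + ((k : ℝ) - V.card) / γ₂)) *
        (volume {x | posNegGauge V N γ₁ γ₂ C₁ C₂ 1 x < b}).toReal)
      (𝓝[>] 0) (𝓝 (smallBallConst V N γ₁ γ₂ C₁ C₂)) := by
  have hγ₁ : 0 < γ₁ := hγ₂.trans_le hγ
  have hθ : 0 ≤ γ₂⁻¹ - γ₁⁻¹ := sub_nonneg.2 (inv_anti₀ hγ₂ hγ)
  refine Tendsto.congr' (eventually_nhdsWithin_of_forall fun b hb =>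
    (rpow_mul_volume_setOf_posNegGauge_lt hγ₁ hγ₂ hC₁ hC₂ hb).symm) ?_
  refine tendsto_finsetSum _ fun S _ => Tendsto.mul ?_ ((ENNReal.tendsto_toReal ?_).comp
    (tendsto_volume_setOf_posNegGauge_lt_inter_orthant hγ₂ hγ hC₁ hC₂ S))
  · exact (Real.continuousAt_rpow_const 0 _
      (Or.inr (mul_nonneg (Nat.cast_nonneg _) hθ))).tendsto.mono_left nhdsWithin_le_nhds
  · exact ne_top_of_le_ne_top (volume_setOf_posNegGauge_lt_ne_top hγ₁ hγ₂ hC₁ hC₂ _ 1)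
      (measure_mono Set.inter_subset_left)

lemma smallBallConst_pos (hγ₁ : 0 < γ₁) (hγ₂ : 0 < γ₂) (hC₁ : 0 < C₁) (hC₂ : 0 < C₂) :
    0 < smallBallConst V N γ₁ γ₂ C₁ C₂ := by
  set B := {y | posNegGauge V N γ₁ γ₂ C₁ C₂ (0 ^ (γ₂⁻¹ - γ₁⁻¹)) y < 1}
  have hB : IsOpen B := isOpen_setOf_posNegGauge_lt hγ₁.le hγ₂.le _ 1
  have h0 : (0 : Fin k → ℝ) ∈ B := by simp [B, posNegGauge_zero hγ₁ hγ₂]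
  obtain ⟨t, htB, ht⟩ : ∃ t : ℝ, (fun _ => t) ∈ B ∧ 0 < t := by
    have hconst : Tendsto (fun t : ℝ => fun _ : Fin k => t) (𝓝[>] 0) (𝓝 0) :=
      ((continuous_pi fun _ => continuous_id).tendsto' 0 0 rfl).mono_left nhdsWithin_le_nhds
    exact ((hconst.eventually (hB.mem_nhds h0)).and self_mem_nhdsWithin).exists
  have hU : IsOpen (B ∩ Set.univ.pi fun _ => Set.Ioi 0) :=
    hB.inter (isOpen_set_pi Set.finite_univ fun _ _ => isOpen_Ioi)
  have hvol : 0 < volume (B ∩ orthant Finset.univ) :=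
    (hU.measure_pos volume ⟨_, htB, fun _ _ => ht⟩).trans_le <| measure_mono <|
      Set.inter_subset_inter_right _ fun x hx j => by simpa using (hx j trivial).le
  have hterm : 0 < (0 : ℝ) ^ ((V \ Finset.univ).card * (γ₂⁻¹ - γ₁⁻¹)) *
      (volume (B ∩ orthant Finset.univ)).toReal := by
    rw [show V \ Finset.univ = ∅ by simp, Finset.card_empty, Nat.cast_zero, zero_mul,
      Real.rpow_zero, one_mul]
    exact ENNReal.toReal_pos hvol.ne' (ne_top_of_le_ne_top
      (volume_setOf_posNegGauge_lt_ne_top hγ₁ hγ₂ hC₁ hC₂ _ 1) (measure_mono Set.inter_subset_left))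
  exact hterm.trans_le (Finset.single_le_sum (f := fun S => (0 : ℝ) ^ ((V \ S).card *
    (γ₂⁻¹ - γ₁⁻¹)) * (volume (B ∩ orthant S)).toReal) (fun S _ => by positivity)
    (Finset.mem_univ _))

end Asymptotics

section Density

variable {α ι : Type*} [MeasurableSpace α] {ν : Measure α} {p : α → ℝ}

lemma abs_toReal_withDensity_sub_le {A : Set α} (hA : MeasurableSet A) (hνA : ν A ≠ ⊤)
    {a ε : ℝ} (ha : 0 ≤ a) (hε : 0 ≤ ε) (hp : ∀ x ∈ A, |p x - a| ≤ ε) :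
    |(ν.withDensity (fun x => ENNReal.ofReal (p x)) A).toReal - a * (ν A).toReal| ≤
      ε * (ν A).toReal := by
  have hup : ν.withDensity (fun x => ENNReal.ofReal (p x)) A ≤ ENNReal.ofReal (a + ε) * ν A := by
    rw [withDensity_apply _ hA, ← setLIntegral_const]
    exact setLIntegral_mono measurable_const fun x hx =>
      ENNReal.ofReal_le_ofReal (by linarith [(abs_le.1 (hp x hx)).2])
  have hlo : ENNReal.ofReal (a - ε) * ν A ≤ ν.withDensity (fun x => ENNReal.ofReal (p x)) A := by
    rw [withDensity_apply _ hA, ← setLIntegral_const]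
    exact lintegral_mono_ae ((ae_restrict_iff' hA).2 (ae_of_all _ fun x hx =>
      ENNReal.ofReal_le_ofReal (by linarith [(abs_le.1 (hp x hx)).1])))
  have hup' := ENNReal.toReal_mono (by finiteness) hup
  have hlo' := ENNReal.toReal_mono (ne_top_of_le_ne_top (by finiteness) hup) hlo
  rw [ENNReal.toReal_mul, ENNReal.toReal_ofReal (by positivity)] at hup'
  rw [ENNReal.toReal_mul, ENNReal.toReal_ofReal'] at hlo'
  have hmax := mul_le_mul_of_nonneg_right (le_max_left (a - ε) 0)
    (ENNReal.toReal_nonneg (a := ν A))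
  rw [abs_le]
  constructor <;> linarith

lemma tendsto_mul_toReal_withDensity [TopologicalSpace α] {x₀ : α} (hp : ContinuousAt p x₀)
    (hp₀ : 0 ≤ p x₀) {l : Filter ι} {A : ι → Set α} (hA : Tendsto A l (𝓝 x₀).smallSets)
    (hAm : ∀ i, MeasurableSet (A i)) (hAfin : ∀ i, ν (A i) ≠ ⊤) {w : ι → ℝ} {c : ℝ}
    (hw : Tendsto (fun i => w i * (ν (A i)).toReal) l (𝓝 c)) :
    Tendsto (fun i => w i * (ν.withDensity (fun x => ENNReal.ofReal (p x)) (A i)).toReal) l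
      (𝓝 (c * p x₀)) := by
  set μ := ν.withDensity (fun x => ENNReal.ofReal (p x))
  have hsmall : (fun i => w i * (μ (A i)).toReal - p x₀ * (w i * (ν (A i)).toReal)) =o[l]
      fun i => w i * (ν (A i)).toReal := by
    refine Asymptotics.IsLittleO.of_bound fun ε hε => ?_
    have hnear : ∀ᶠ x in 𝓝 x₀, |p x - p x₀| ≤ ε :=
      hp (Metric.closedBall_mem_nhds (p x₀) hε)
    filter_upwards [hA.eventually (eventually_smallSets_forall.2 hnear)] with i hi
    rw [Real.norm_eq_abs, Real.norm_eq_abs, mul_left_comm, ← mul_sub, abs_mul, abs_mul,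
      mul_left_comm, abs_of_nonneg (ENNReal.toReal_nonneg (a := ν (A i)))]
    exact mul_le_mul_of_nonneg_left
      (abs_toReal_withDensity_sub_le (hAm i) (hAfin i) hp₀ hε.le hi) (abs_nonneg _)
  have hzero := (Asymptotics.isLittleO_one_iff ℝ).1 (hsmall.trans_isBigO (hw.isBigO_one ℝ))
  simpa [mul_comm c] using hzero.add (hw.const_mul (p x₀))

end Density

theorem stmt_15_general {k : ℕ} (V : Finset (Fin k)) (Nm : MonNorm k)
    (γ₁ γ₂ C₁ C₂ : ℝ)
    (hγ₂0 : 0 < γ₂) (hγ : γ₂ ≤ γ₁)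
    (hC₁ : 0 < C₁) (hC₂ : 0 < C₂) :
    ∃ c : ℝ, 0 < c ∧
      ∀ (Ω : Type) (_ : MeasurableSpace Ω) (P : Measure Ω), IsProbabilityMeasure P →
        ∀ (X : Ω → (Fin k → ℝ)), Measurable X →
          ∀ p : (Fin k → ℝ) → ℝ,
            Measure.map X P = volume.withDensity (fun y => ENNReal.ofReal (p y)) →
            ContinuousAt p 0 → 0 < p 0 →
            (0 : Fin k → ℝ) ∈ interior (Function.support p) →
            Tendsto (fun b : ℝ =>
                b ^ (-((V.card : ℝ) / γ₁ + ((k : ℝ) - V.card) / γ₂)) *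
                  (P {ω | C₁ * Nm.N (vplus V (X ω)) ^ γ₁ +
                          C₂ * Nm.N (vminus V (X ω)) ^ γ₂ < b}).toReal)
              (nhdsWithin 0 (Set.Ioi 0)) (nhds (c * p 0)) := by
  have hγ₁ : 0 < γ₁ := hγ₂0.trans_le hγ
  refine ⟨smallBallConst V Nm γ₁ γ₂ C₁ C₂, smallBallConst_pos hγ₁ hγ₂0 hC₁ hC₂, ?_⟩
  intro Ω _ P _ X hX p hmap hp hp₀ _
  have hmeas : ∀ b : ℝ, MeasurableSet {x | posNegGauge V Nm γ₁ γ₂ C₁ C₂ 1 x < b} := fun b =>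
    (isOpen_setOf_posNegGauge_lt hγ₁.le hγ₂0.le 1 b).measurableSet
  have hlaw : ∀ b : ℝ,
      P {ω | C₁ * Nm.N (vplus V (X ω)) ^ γ₁ + C₂ * Nm.N (vminus V (X ω)) ^ γ₂ < b} =
        volume.withDensity (fun y => ENNReal.ofReal (p y))
          {x | posNegGauge V Nm γ₁ γ₂ C₁ C₂ 1 x < b} := fun b => by
    rw [← hmap, Measure.map_apply hX (hmeas b)]
    simp only [Set.preimage_ofPred_eq, posNegGauge_one]
  simp_rw [hlaw]
  exact tendsto_mul_toReal_withDensity hp hp₀.le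
    (tendsto_setOf_posNegGauge_lt_smallSets hγ₁ hγ₂0 hC₁ hC₂) hmeas
    (volume_setOf_posNegGauge_lt_ne_top hγ₁ hγ₂0 hC₁ hC₂ 1)
    (tendsto_rpow_mul_volume_setOf_posNegGauge_lt hγ₂0 hγ hC₁ hC₂)

/-- small-ball probability asymptotics. There is a constant `c > 0`,
depending only on the geometry (not on the density `p_X`), such that
`b^{−(k₊/γ₁+(k−k₊)/γ₂)} P(C₁‖(X)_{V+}‖^{γ₁} + C₂‖(X)_{V−}‖^{γ₂} < b) → c · p_X(0)`
as `b → 0⁺`. -/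
theorem stmt_15 {k : ℕ} (V : Finset (Fin k)) (Nm : MonNorm k)
    (γ₁ γ₂ C₁ C₂ : ℝ)
    (hγ₂0 : 0 < γ₂) (hγ : γ₂ ≤ γ₁) (hγ₁1 : γ₁ ≤ 1)
    (hC₁ : 0 < C₁) (hC₂ : 0 < C₂) :
    ∃ c : ℝ, 0 < c ∧
      ∀ (Ω : Type) (_ : MeasurableSpace Ω) (P : Measure Ω), IsProbabilityMeasure P →
        ∀ (X : Ω → (Fin k → ℝ)), Measurable X →
          ∀ p : (Fin k → ℝ) → ℝ,
            Measure.map X P = volume.withDensity (fun y => ENNReal.ofReal (p y)) →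
            ContinuousAt p 0 → 0 < p 0 →
            (0 : Fin k → ℝ) ∈ interior (Function.support p) →
            Tendsto (fun b : ℝ =>
                b ^ (-((V.card : ℝ) / γ₁ + ((k : ℝ) - V.card) / γ₂)) *
                  (P {ω | C₁ * Nm.N (vplus V (X ω)) ^ γ₁ +
                          C₂ * Nm.N (vminus V (X ω)) ^ γ₂ < b}).toReal)
              (nhdsWithin 0 (Set.Ioi 0)) (nhds (c * p 0)) :=
  stmt_15_general V Nm γ₁ γ₂ C₁ C₂ hγ₂0 hγ hC₁ hC₂
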